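/- Let Ψ : (ℝ³∖{0}) × ℝ³ → ℝ be differentiable and define F_Ψ(u, u̇) = 3((u̇·u)/‖u‖²)·u̇ − 3((u̇·u)²/‖u‖⁴)·u − m·(u × u̇) + Ψ(u, u̇)·u. Then for all u ≠ 0 and all u̇ ∈ ℝ³ the identity 3·F_Ψ(u, u̇) − (∂F_Ψ/∂u)(u, u̇)[u] − 2·(∂F_Ψ/∂u̇)(u, u̇)[u̇] = 3·μ(u, u̇)·u holds, where the partial Fréchet derivatives act on the indicated slots, and μ(u, u̇) = (1/3)·(2Ψ(u, u̇) − 2·u̇·∇_{u̇}Ψ(u, u̇) − u·∇_uΨ(u, u̇)). -/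

import Mathlib

/-!
For a map `F` differentiable at `(u, u̇)`, the derivative of `s ↦ F (s • u, s ^ 2 • u̇)` at
`s = 1` is `∂_u F[u] + 2 ∂_u̇ F[u̇]` (a weighted Euler identity). Every term of `F_Ψ` other than `Ψ • u`
is homogeneous of degree 3 for this scaling, so it cancels against its share of `3 F_Ψ`;
the term `Ψ • u` leaves `(3Ψ - Ψ - ∂_uΨ[u] - 2 ∂_u̇Ψ[u̇]) • u`.
-/

noncomputable section
open RealInnerProductSpace

/-- Three-dimensional Euclidean space. -/
abbrev E3 := EuclideanSpace ℝ (Fin 3)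

/-- The cross product on ℝ³. -/
def cross (a b : E3) : E3 :=
  (WithLp.equiv 2 (Fin 3 → ℝ)).symm
    ![a 1 * b 2 - a 2 * b 1, a 2 * b 0 - a 0 * b 2, a 0 * b 1 - a 1 * b 0]

/-- The Euler–Poisson expression
𝓔(u, u̇, ü) = (ü × u)/‖u‖³ − 3((u̇·u)/‖u‖⁵)(u̇ × u) + (m/‖u‖³)(‖u‖² u̇ − (u̇·u) u). -/
def EP (m : ℝ) (u du ddu : E3) : E3 :=
  (‖u‖ ^ 3)⁻¹ • cross ddu u - (3 * ⟪du, u⟫ / ‖u‖ ^ 5) • cross du u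
    + (m / ‖u‖ ^ 3) • (‖u‖ ^ 2 • du - ⟪du, u⟫ • u)

/-- The right-hand side F_Ψ(u, u̇) of the equation solved for the third derivative,
for an arbitrary supplementary function Ψ. -/
def FPsi (m : ℝ) (Ψ : E3 × E3 → ℝ) (u du : E3) : E3 :=
  (3 * (⟪du, u⟫ / ‖u‖ ^ 2)) • du - (3 * (⟪du, u⟫ ^ 2 / ‖u‖ ^ 4)) • u
    - m • cross u du + Ψ (u, du) • u

section
variable {𝕜 E F G : Type*} [NontriviallyNormedField 𝕜] [NormedAddCommGroup E] [NormedSpace 𝕜 E]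
  [NormedAddCommGroup F] [NormedSpace 𝕜 F] [NormedAddCommGroup G] [NormedSpace 𝕜 G]
  {f : E × F → G} {x : E} {y : F}

theorem fderiv_apply_eq_partial_add_partial (hf : DifferentiableAt 𝕜 f (x, y)) (a : E) (b : F) :
    fderiv 𝕜 f (x, y) (a, b) =
      fderiv 𝕜 (fun w => f (w, y)) x a + fderiv 𝕜 (fun w => f (x, w)) y b := by
  have hfst : HasFDerivAt (fun w => f (w, y)) (fderiv 𝕜 f (x, y) ∘L .inl 𝕜 E F) x :=
    hf.hasFDerivAt.comp x (hasFDerivAt_prodMk_left x y)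
  have hsnd : HasFDerivAt (fun w => f (x, w)) (fderiv 𝕜 f (x, y) ∘L .inr 𝕜 E F) y :=
    hf.hasFDerivAt.comp y (hasFDerivAt_prodMk_right x y)
  simp [hfst.fderiv, hsnd.fderiv, ← map_add]

theorem hasDerivAt_comp_smul_smul_sq (hf : DifferentiableAt 𝕜 f (x, y)) :
    HasDerivAt (fun s : 𝕜 => f (s • x, s ^ 2 • y)) (fderiv 𝕜 f (x, y) (x, (2 : 𝕜) • y)) 1 := by
  have hcurve : HasDerivAt (fun s : 𝕜 => (s • x, s ^ 2 • y)) (x, (2 : 𝕜) • y) 1 := by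
    simpa using ((hasDerivAt_id (1 : 𝕜)).smul_const x).prodMk
      (((hasDerivAt_id (1 : 𝕜)).pow 2).smul_const y)
  have hf' : HasFDerivAt f (fderiv 𝕜 f (x, y)) ((1 : 𝕜) • x, (1 : 𝕜) ^ 2 • y) := by
    simpa using hf.hasFDerivAt
  exact hf'.comp_hasDerivAt 1 hcurve
end

theorem cross_smul_left (t : ℝ) (a b : E3) : cross (t • a) b = t • cross a b := by
  ext i; fin_cases i <;> simp [cross] <;> ring

theorem cross_smul_right (t : ℝ) (a b : E3) : cross a (t • b) = t • cross a b := by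
  ext i; fin_cases i <;> simp [cross] <;> ring

theorem differentiable_cross : Differentiable ℝ (fun p : E3 × E3 => cross p.1 p.2) := by
  rw [differentiable_euclidean]
  intro i; fin_cases i <;> simp [cross] <;> fun_prop

theorem FPsi_eq_FPsi_zero_add (m : ℝ) (Ψ : E3 × E3 → ℝ) (u v : E3) :
    FPsi m Ψ u v = FPsi m (fun _ => 0) u v + Ψ (u, v) • u := by
  simp [FPsi]

theorem FPsi_zero_smul_smul_sq (m s : ℝ) (u v : E3) :
    FPsi m (fun _ => 0) (s • u) (s ^ 2 • v) = s ^ 3 • FPsi m (fun _ => 0) u v := by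
  simp only [FPsi, real_inner_smul_left, real_inner_smul_right, norm_smul, cross_smul_left,
    cross_smul_right, Real.norm_eq_abs, mul_pow, even_two.pow_abs,
    (show Even 4 by decide).pow_abs, zero_smul, add_zero]
  -- At `s = 0` and at `u = 0` both sides vanish, since `x / 0 = 0`.
  rcases eq_or_ne s 0 with rfl | hs
  · simp
  rcases eq_or_ne u 0 with rfl | hu
  · simp only [norm_zero]; module
  have hu' : ‖u‖ ≠ 0 := norm_ne_zero_iff.2 hu
  match_scalars <;> field_simp

theorem differentiableAt_FPsi {m : ℝ} {Ψ : E3 × E3 → ℝ} {u v : E3}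
    (hΨ : DifferentiableAt ℝ Ψ (u, v)) (hu : u ≠ 0) :
    DifferentiableAt ℝ (fun p : E3 × E3 => FPsi m Ψ p.1 p.2) (u, v) := by
  have hcross := differentiable_cross (u, v)
  have hinner : DifferentiableAt ℝ (fun p : E3 × E3 => ⟪p.2, p.1⟫) (u, v) :=
    differentiableAt_snd.inner ℝ differentiableAt_fst
  have hnorm : DifferentiableAt ℝ (fun p : E3 × E3 => ‖p.1‖) (u, v) :=
    differentiableAt_fst.norm ℝ hu
  unfold FPsi
  fun_prop (disch := simpa using hu)

/-- the reducibility identity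
3F_Ψ − (∂F_Ψ/∂u)[u] − 2(∂F_Ψ/∂u̇)[u̇] = 3μ·u with
μ = (1/3)(2Ψ − 2u̇·∇_{u̇}Ψ − u·∇_uΨ). -/
theorem FPsi_reducibility_mu (m : ℝ) (Ψ : E3 × E3 → ℝ)
    (hΨ : ∀ (u du : E3), u ≠ 0 → DifferentiableAt ℝ Ψ (u, du))
    (u du : E3) (hu : u ≠ 0) :
    (3 : ℝ) • FPsi m Ψ u du - fderiv ℝ (fun w => FPsi m Ψ w du) u u
        - (2 : ℝ) • fderiv ℝ (fun w => FPsi m Ψ u w) du du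
      = (3 * ((1 / 3) * (2 * Ψ (u, du)
          - 2 * ⟪du, gradient (fun w => Ψ (u, w)) du⟫
          - ⟪u, gradient (fun w => Ψ (w, du)) u⟫))) • u := by
  have hΨu := hΨ u du hu
  have hF := differentiableAt_FPsi (m := m) hΨu hu
  have hhomogeneous : HasDerivAt (fun s : ℝ => s ^ 3 • FPsi m (fun _ => 0) u du)
      ((3 : ℝ) • FPsi m (fun _ => 0) u du) 1 := by
    simpa using (hasDerivAt_pow 3 (1 : ℝ)).smul_const (FPsi m (fun _ => 0) u du)
  have hΨscaled : HasDerivAt (fun s : ℝ => Ψ (s • u, s ^ 2 • du) • s • u)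
      ((Ψ (u, du) + fderiv ℝ Ψ (u, du) (u, (2 : ℝ) • du)) • u) 1 := by
    simpa [add_smul] using
      (hasDerivAt_comp_smul_smul_sq hΨu).fun_smul ((hasDerivAt_id (1 : ℝ)).smul_const u)
  have hscaled := hhomogeneous.fun_add hΨscaled
  simp only [← FPsi_zero_smul_smul_sq, ← FPsi_eq_FPsi_zero_add] at hscaled
  have heuler := (hasDerivAt_comp_smul_smul_sq hF).unique hscaled
  rw [fderiv_apply_eq_partial_add_partial hF, fderiv_apply_eq_partial_add_partial hΨu,
    map_smul, map_smul] at heuler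
  simp only [inner_gradient_right, conj_trivial]
  rw [sub_sub, heuler, FPsi_eq_FPsi_zero_add m Ψ u du]
  module

end
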